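/- Let C be a collection for a discrete Morse-Bott function f on a finite abstract simplicial complex K, with C ≠ C^red. Then: (a) for every cell σ ∈ C that is upward noncritical w.r.t. C there is a unique cell w ∉ C with σ < w and f(σ) > f(w), and the resulting map σ ↦ w is injective on the set of upward noncritical cells of C; (b) for every cell σ ∈ C that is downward noncritical w.r.t. C there is a unique cell w ∉ C with w < σ and f(σ) < f(w), and the resulting map σ ↦ w is injective on the set of downward noncritical cells of C. -/

import Mathlib

open Finset

noncomputable section
open scoped Classical

/-- `σ` is a facet of `τ`: `σ ⊆ τ` and `dim σ = dim τ − 1`. -/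
def Facet (σ τ : Finset ℕ) : Prop := σ ⊆ τ ∧ σ.card + 1 = τ.card

/-- A finite abstract simplicial complex: a finite family of nonempty finite sets
closed under taking nonempty subsets. -/
def IsComplex (K : Finset (Finset ℕ)) : Prop :=
  (∀ σ ∈ K, σ.Nonempty) ∧ ∀ σ ∈ K, ∀ ν, ν ⊆ σ → ν.Nonempty → ν ∈ K

/-- The closure of a set of cells: all nonempty subsets of its cells. -/
def closureOf (S : Finset (Finset ℕ)) : Finset (Finset ℕ) :=
  S.biUnion fun σ => σ.powerset.filter fun ν => ν ≠ ∅

/-- The graph on `C` joining two cells whenever their closures intersect is connected. -/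
def ConnectedOn (C : Finset (Finset ℕ)) : Prop :=
  ∀ a ∈ C, ∀ b ∈ C,
    Relation.ReflTransGen
      (fun x y => x ∈ C ∧ y ∈ C ∧ (closureOf {x} ∩ closureOf {y}).Nonempty) a b

/-- A nonempty set of cells of `K`, all with the same `f`-value, whose
closure-intersection graph is connected. -/
def IsPreCollection (K : Finset (Finset ℕ)) (f : Finset ℕ → ℝ) (C : Finset (Finset ℕ)) :
    Prop :=
  C ⊆ K ∧ C.Nonempty ∧ (∀ σ ∈ C, ∀ τ ∈ C, f σ = f τ) ∧ ConnectedOn C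

/-- A collection for `f`: a maximal constant-value connected set of cells. -/
def IsCollection (K : Finset (Finset ℕ)) (f : Finset ℕ → ℝ) (C : Finset (Finset ℕ)) :
    Prop :=
  IsPreCollection K f C ∧ ∀ C', IsPreCollection K f C' → C ⊆ C' → C' = C

/-- `#{τ ∉ C : σ < τ, f(τ) < f(σ)}`. -/
def UpCount (K : Finset (Finset ℕ)) (f : Finset ℕ → ℝ) (C : Finset (Finset ℕ))
    (σ : Finset ℕ) : ℕ :=
  (K.filter fun τ => τ ∉ C ∧ Facet σ τ ∧ f τ < f σ).card

/-- `#{ν ∉ C : ν < σ, f(ν) > f(σ)}`. -/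
def DownCount (K : Finset (Finset ℕ)) (f : Finset ℕ → ℝ) (C : Finset (Finset ℕ))
    (σ : Finset ℕ) : ℕ :=
  (K.filter fun ν => ν ∉ C ∧ Facet ν σ ∧ f σ < f ν).card

/-- A discrete Morse-Bott function on `K`. -/
def IsMorseBott (K : Finset (Finset ℕ)) (f : Finset ℕ → ℝ) : Prop :=
  ∀ C, IsCollection K f C → ∀ σ ∈ C, UpCount K f C σ ≤ 1 ∧ DownCount K f C σ ≤ 1

/-- `σ` is upward noncritical w.r.t. `C`. -/
def UpNoncrit (K : Finset (Finset ℕ)) (f : Finset ℕ → ℝ) (C : Finset (Finset ℕ))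
    (σ : Finset ℕ) : Prop :=
  ∃ w ∈ K, w ∉ C ∧ Facet σ w ∧ f w < f σ

/-- `σ` is downward noncritical w.r.t. `C`. -/
def DownNoncrit (K : Finset (Finset ℕ)) (f : Finset ℕ → ℝ) (C : Finset (Finset ℕ))
    (σ : Finset ℕ) : Prop :=
  ∃ w ∈ K, w ∉ C ∧ Facet w σ ∧ f σ < f w

/-- The reduced collection `C^red`: the cells of `C` that are neither upward nor
downward noncritical w.r.t. `C`. -/
def reducedOf (K : Finset (Finset ℕ)) (f : Finset ℕ → ℝ) (C : Finset (Finset ℕ)) :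
    Finset (Finset ℕ) :=
  C.filter fun σ => ¬ UpNoncrit K f C σ ∧ ¬ DownNoncrit K f C σ

/-- A noncritical pair: a two-element set `{σ, τ}` with `σ < τ` and `f σ ≥ f τ`. -/
def IsNoncritPair (f : Finset ℕ → ℝ) (S : Finset (Finset ℕ)) : Prop :=
  ∃ σ τ, Facet σ τ ∧ f τ ≤ f σ ∧ S = {σ, τ}

/-- A discrete Morse function in Forman's sense. -/
def IsDiscreteMorse (K : Finset (Finset ℕ)) (g : Finset ℕ → ℝ) : Prop :=
  ∀ σ ∈ K, (K.filter fun τ => Facet σ τ ∧ g τ ≤ g σ).card ≤ 1 ∧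
    (K.filter fun ν => Facet ν σ ∧ g σ ≤ g ν).card ≤ 1

/-- A critical cell of `g`. -/
def IsCritical (K : Finset (Finset ℕ)) (g : Finset ℕ → ℝ) (σ : Finset ℕ) : Prop :=
  σ ∈ K ∧ (K.filter fun τ => Facet σ τ ∧ g τ ≤ g σ).card = 0 ∧
    (K.filter fun ν => Facet ν σ ∧ g σ ≤ g ν).card = 0

/-! The uniqueness in both parts is the Morse-Bott count at `σ` inside `C`. Injectivity is the
Morse-Bott count at the witness `w` inside the collection of `w`: the cells `σ₁, σ₂` have a
different value from `w`, so they lie outside that collection. -/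

section Collections

variable {K : Finset (Finset ℕ)} {f : Finset ℕ → ℝ} {C : Finset (Finset ℕ)}

lemma IsCollection.value_eq (hC : IsCollection K f C) {σ τ : Finset ℕ} (hσ : σ ∈ C)
    (hτ : τ ∈ C) : f σ = f τ :=
  hC.1.2.2.1 σ hσ τ hτ

lemma isPreCollection_singleton {w : Finset ℕ} (hw : w ∈ K) : IsPreCollection K f {w} := by
  refine ⟨singleton_subset_iff.mpr hw, singleton_nonempty w, ?_, ?_⟩
  · simp
  · intro a ha b hb
    rw [mem_singleton] at ha hb
    rw [ha, hb]

/-- A precollection of maximal cardinality among those containing `w` is a collection. -/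
lemma exists_isCollection_mem {w : Finset ℕ} (hw : w ∈ K) : ∃ C, IsCollection K f C ∧ w ∈ C := by
  set S := K.powerset.filter fun D => IsPreCollection K f D ∧ w ∈ D
  have hwS : {w} ∈ S := by
    simpa [S, hw] using isPreCollection_singleton (f := f) hw
  obtain ⟨D, hDS, hDmax⟩ := S.exists_max_image card ⟨_, hwS⟩
  obtain ⟨-, hD, hwD⟩ := mem_filter.mp hDS
  refine ⟨D, ⟨hD, fun C' hC' hDC' => ?_⟩, hwD⟩
  have hC'S : C' ∈ S := mem_filter.mpr ⟨mem_powerset.mpr hC'.1, hC', hDC' hwD⟩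
  exact (eq_of_subset_of_card_le hDC' (hDmax C' hC'S)).symm

lemma eq_of_upCount_le_one {σ w₁ w₂ : Finset ℕ} (h : UpCount K f C σ ≤ 1)
    (hw₁ : w₁ ∈ K ∧ w₁ ∉ C ∧ Facet σ w₁ ∧ f w₁ < f σ)
    (hw₂ : w₂ ∈ K ∧ w₂ ∉ C ∧ Facet σ w₂ ∧ f w₂ < f σ) : w₁ = w₂ :=
  card_le_one.mp h w₁ (mem_filter.mpr ⟨hw₁.1, hw₁.2⟩) w₂ (mem_filter.mpr ⟨hw₂.1, hw₂.2⟩)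

lemma eq_of_downCount_le_one {σ w₁ w₂ : Finset ℕ} (h : DownCount K f C σ ≤ 1)
    (hw₁ : w₁ ∈ K ∧ w₁ ∉ C ∧ Facet w₁ σ ∧ f σ < f w₁)
    (hw₂ : w₂ ∈ K ∧ w₂ ∉ C ∧ Facet w₂ σ ∧ f σ < f w₂) : w₁ = w₂ :=
  card_le_one.mp h w₁ (mem_filter.mpr ⟨hw₁.1, hw₁.2⟩) w₂ (mem_filter.mpr ⟨hw₂.1, hw₂.2⟩)

end Collections

namespace IsMorseBott

variable {K : Finset (Finset ℕ)} {f : Finset ℕ → ℝ}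

lemma existsUnique_of_upNoncrit (hf : IsMorseBott K f) {C : Finset (Finset ℕ)}
    (hC : IsCollection K f C) {σ : Finset ℕ} (hσ : σ ∈ C) (hup : UpNoncrit K f C σ) :
    ∃! w, w ∈ K ∧ w ∉ C ∧ Facet σ w ∧ f w < f σ := by
  obtain ⟨w, hw⟩ := hup
  exact ⟨w, hw, fun w' hw' => eq_of_upCount_le_one (hf C hC σ hσ).1 hw' hw⟩

lemma existsUnique_of_downNoncrit (hf : IsMorseBott K f) {C : Finset (Finset ℕ)}
    (hC : IsCollection K f C) {σ : Finset ℕ} (hσ : σ ∈ C) (hdown : DownNoncrit K f C σ) :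
    ∃! w, w ∈ K ∧ w ∉ C ∧ Facet w σ ∧ f σ < f w := by
  obtain ⟨w, hw⟩ := hdown
  exact ⟨w, hw, fun w' hw' => eq_of_downCount_le_one (hf C hC σ hσ).2 hw' hw⟩

lemma eq_of_common_coface_below (hf : IsMorseBott K f) {σ₁ σ₂ w : Finset ℕ}
    (hσ₁ : σ₁ ∈ K) (hσ₂ : σ₂ ∈ K) (hw : w ∈ K)
    (h₁ : Facet σ₁ w ∧ f w < f σ₁) (h₂ : Facet σ₂ w ∧ f w < f σ₂) :
    σ₁ = σ₂ := by
  obtain ⟨C', hC', hwC'⟩ := exists_isCollection_mem (f := f) hw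
  have h₁C' : σ₁ ∉ C' := fun h => h₁.2.ne' (hC'.value_eq h hwC')
  have h₂C' : σ₂ ∉ C' := fun h => h₂.2.ne' (hC'.value_eq h hwC')
  exact eq_of_downCount_le_one (hf C' hC' w hwC').2 ⟨hσ₁, h₁C', h₁⟩ ⟨hσ₂, h₂C', h₂⟩

lemma eq_of_common_face_above (hf : IsMorseBott K f) {σ₁ σ₂ w : Finset ℕ}
    (hσ₁ : σ₁ ∈ K) (hσ₂ : σ₂ ∈ K) (hw : w ∈ K)
    (h₁ : Facet w σ₁ ∧ f σ₁ < f w) (h₂ : Facet w σ₂ ∧ f σ₂ < f w) :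
    σ₁ = σ₂ := by
  obtain ⟨C', hC', hwC'⟩ := exists_isCollection_mem (f := f) hw
  have h₁C' : σ₁ ∉ C' := fun h => h₁.2.ne (hC'.value_eq h hwC')
  have h₂C' : σ₂ ∉ C' := fun h => h₂.2.ne (hC'.value_eq h hwC')
  exact eq_of_upCount_le_one (hf C' hC' w hwC').1 ⟨hσ₁, h₁C', h₁⟩ ⟨hσ₂, h₂C', h₂⟩

end IsMorseBott

theorem statement3_general (K : Finset (Finset ℕ)) (f : Finset ℕ → ℝ)
    (hf : IsMorseBott K f) (C : Finset (Finset ℕ)) (hC : IsCollection K f C) :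
    ((∀ σ ∈ C, UpNoncrit K f C σ →
        ∃! w, w ∈ K ∧ w ∉ C ∧ Facet σ w ∧ f w < f σ) ∧
      ∀ σ₁ ∈ C, ∀ σ₂ ∈ C, UpNoncrit K f C σ₁ → UpNoncrit K f C σ₂ →
        ∀ w, (w ∈ K ∧ w ∉ C ∧ Facet σ₁ w ∧ f w < f σ₁) →
          (w ∈ K ∧ w ∉ C ∧ Facet σ₂ w ∧ f w < f σ₂) → σ₁ = σ₂) ∧
    ((∀ σ ∈ C, DownNoncrit K f C σ →
        ∃! w, w ∈ K ∧ w ∉ C ∧ Facet w σ ∧ f σ < f w) ∧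
      ∀ σ₁ ∈ C, ∀ σ₂ ∈ C, DownNoncrit K f C σ₁ → DownNoncrit K f C σ₂ →
        ∀ w, (w ∈ K ∧ w ∉ C ∧ Facet w σ₁ ∧ f σ₁ < f w) →
          (w ∈ K ∧ w ∉ C ∧ Facet w σ₂ ∧ f σ₂ < f w) → σ₁ = σ₂) := by
  have hCK : C ⊆ K := hC.1.1
  refine ⟨⟨fun σ hσ => hf.existsUnique_of_upNoncrit hC hσ, ?_⟩,
    fun σ hσ => hf.existsUnique_of_downNoncrit hC hσ, ?_⟩
  · intro σ₁ hσ₁ σ₂ hσ₂ _ _ w hw₁ hw₂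
    exact hf.eq_of_common_coface_below (hCK hσ₁) (hCK hσ₂) hw₁.1 hw₁.2.2 hw₂.2.2
  · intro σ₁ hσ₁ σ₂ hσ₂ _ _ w hw₁ hw₂
    exact hf.eq_of_common_face_above (hCK hσ₁) (hCK hσ₂) hw₁.1 hw₁.2.2 hw₂.2.2

/-- If `C ≠ C^red`, then every upward (resp. downward) noncritical cell `σ`
of `C` has a unique witness `w ∉ C` with `σ < w` and `f σ > f w` (resp. `w < σ` and
`f σ < f w`), and the assignment `σ ↦ w` is injective on the upward (resp. downward)
noncritical cells of `C`. -/
theorem statement3 (K : Finset (Finset ℕ)) (hK : IsComplex K) (f : Finset ℕ → ℝ)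
    (hf : IsMorseBott K f) (C : Finset (Finset ℕ)) (hC : IsCollection K f C)
    (hne : C ≠ reducedOf K f C) :
    ((∀ σ ∈ C, UpNoncrit K f C σ →
        ∃! w, w ∈ K ∧ w ∉ C ∧ Facet σ w ∧ f w < f σ) ∧
      ∀ σ₁ ∈ C, ∀ σ₂ ∈ C, UpNoncrit K f C σ₁ → UpNoncrit K f C σ₂ →
        ∀ w, (w ∈ K ∧ w ∉ C ∧ Facet σ₁ w ∧ f w < f σ₁) →
          (w ∈ K ∧ w ∉ C ∧ Facet σ₂ w ∧ f w < f σ₂) → σ₁ = σ₂) ∧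
    ((∀ σ ∈ C, DownNoncrit K f C σ →
        ∃! w, w ∈ K ∧ w ∉ C ∧ Facet w σ ∧ f σ < f w) ∧
      ∀ σ₁ ∈ C, ∀ σ₂ ∈ C, DownNoncrit K f C σ₁ → DownNoncrit K f C σ₂ →
        ∀ w, (w ∈ K ∧ w ∉ C ∧ Facet w σ₁ ∧ f σ₁ < f w) →
          (w ∈ K ∧ w ∉ C ∧ Facet w σ₂ ∧ f σ₂ < f w) → σ₁ = σ₂) :=
  statement3_general K f hf C hC
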